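/- Let G be a finite abelian group, X ⊆ G nonempty, z ∈ X fixed, and g : G → ℝ. Suppose that ||g(· + t) − g||_∞ ≤ ε for every t ∈ kT − kT where T = X. Then for X' = X − z, ||g − g * μ_{X'}^{(k)}||_∞ ≤ ε. -/

import Mathlib

open scoped Classical BigOperators Pointwise

variable {G : Type*} [AddCommGroup G] [Fintype G]

/-- The Bohr set `Bohr(Γ, ρ) = {x : |1 - γ(x)| ≤ ρ for all γ ∈ Γ}`. -/
noncomputable def bohr (Γ : Finset (AddChar G ℂ)) (ρ : ℝ) : Finset G :=
  Finset.univ.filter fun x => ∀ γ ∈ Γ, ‖1 - γ x‖ ≤ ρ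

/-- Regularity of the Bohr set `Bohr(Γ, ρ)` (dimension `d = Γ.card`). -/
noncomputable def BohrRegular (Γ : Finset (AddChar G ℂ)) (ρ : ℝ) : Prop :=
  ∀ δ : ℝ, |δ| ≤ 1 / (12 * Γ.card) →
    (1 - 12 * Γ.card * |δ|) * (bohr Γ ρ).card ≤ ((bohr Γ (ρ * (1 + δ))).card : ℝ) ∧
    ((bohr Γ (ρ * (1 + δ))).card : ℝ) ≤ (1 + 12 * Γ.card * |δ|) * (bohr Γ ρ).card

/-- Indicator function of a finite set. -/
noncomputable def ind (A : Finset G) : G → ℝ := fun x => if x ∈ A then 1 else 0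

/-- Normalized indicator `μ_A = 1_A / |A|`. -/
noncomputable def mu (A : Finset G) : G → ℝ := fun x => (if x ∈ A then 1 else 0) / A.card

/-- Convolution `(f * g)(x) = ∑ t, f t * g (x - t)`. -/
noncomputable def conv (f g : G → ℝ) : G → ℝ := fun x => ∑ t, f t * g (x - t)

/-- `L¹` norm. -/
noncomputable def l1 (f : G → ℝ) : ℝ := ∑ x, |f x|

/-- `k`-fold self-convolution `f^{(k)}` (with `f^{(0)}` the Dirac delta at `0`). -/
noncomputable def convPow (f : G → ℝ) : ℕ → G → ℝ
  | 0 => fun x => if x = 0 then 1 else 0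
  | n + 1 => conv f (convPow f n)


/-! Every `u` charged by `μ_{X-z}^{(k)}` is a sum of `k` elements of `X - z`, i.e. lies in
`kX - kz ⊆ kX - kX`. Hence `g - g * μ_{X-z}^{(k)}` at `x` is a probability average of the
differences `g x - g (x - u)` over such `u`, each of size at most `ε`. -/

section Convolution

variable {G : Type*}

lemma mu_nonneg (A : Finset G) (x : G) : 0 ≤ mu A x := by
  unfold mu; positivity

lemma mem_of_mu_ne_zero {A : Finset G} {x : G} (h : mu A x ≠ 0) : x ∈ A := by
  by_contra hx
  simp [mu, hx] at h

variable [Fintype G]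

lemma sum_mu {A : Finset G} (hA : A.Nonempty) : ∑ x, mu A x = 1 := by
  simp only [mu, ← Finset.sum_div, Finset.sum_boole, Finset.filter_mem_eq_inter,
    Finset.univ_inter]
  exact div_self (Nat.cast_ne_zero.2 hA.card_pos.ne')

variable [AddCommGroup G]

lemma conv_comm (f g : G → ℝ) : conv f g = conv g f := by
  ext x
  exact Fintype.sum_equiv (Equiv.subLeft x) _ _ fun t => by simp [mul_comm]

lemma sum_conv (f g : G → ℝ) : ∑ x, conv f g x = (∑ x, f x) * ∑ x, g x := by
  rw [Finset.sum_mul_sum]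
  refine Finset.sum_comm.trans (Finset.sum_congr rfl fun t _ => ?_)
  exact Fintype.sum_equiv (Equiv.subRight t) _ _ fun x => rfl

lemma convPow_nonneg {f : G → ℝ} (hf : ∀ x, 0 ≤ f x) (n : ℕ) (x : G) :
    0 ≤ convPow f n x := by
  induction n generalizing x with
  | zero => unfold convPow; positivity
  | succ n ih => exact Finset.sum_nonneg fun t _ => mul_nonneg (hf t) (ih _)

lemma sum_convPow (f : G → ℝ) (n : ℕ) : ∑ x, convPow f n x = (∑ x, f x) ^ n := by
  induction n with
  | zero => simp [convPow]
  | succ n ih => rw [convPow, sum_conv, ih, pow_succ']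

lemma exists_eq_sum_of_convPow_ne_zero {f : G → ℝ} {n : ℕ} {x : G}
    (h : convPow f n x ≠ 0) : ∃ a : Fin n → G, (∀ i, f (a i) ≠ 0) ∧ x = ∑ i, a i := by
  induction n generalizing x with
  | zero =>
    refine ⟨Fin.elim0, fun i => i.elim0, ?_⟩
    simpa [convPow] using h
  | succ n ih =>
    obtain ⟨s, -, hs⟩ := Finset.exists_ne_zero_of_sum_ne_zero h
    obtain ⟨a, ha, hxa⟩ := ih (right_ne_zero_of_mul hs)
    refine ⟨Fin.cons s a, Fin.cases (left_ne_zero_of_mul hs) ha, ?_⟩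
    rw [Fin.sum_cons, ← hxa, add_sub_cancel]

lemma abs_sub_conv_le {P : G → ℝ} (hP : ∀ u, 0 ≤ P u) (hP1 : ∑ u, P u = 1) (g : G → ℝ)
    (x : G) {ε : ℝ} (hshift : ∀ u, P u ≠ 0 → |g x - g (x - u)| ≤ ε) :
    |g x - conv g P x| ≤ ε := by
  have hdiff : g x - conv g P x = ∑ u, P u * (g x - g (x - u)) := by
    rw [conv_comm]
    simp only [conv, mul_sub, Finset.sum_sub_distrib, ← Finset.sum_mul, hP1, one_mul]
  have hterm : ∀ u, |P u * (g x - g (x - u))| ≤ P u * ε := fun u => by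
    rw [abs_mul, abs_of_nonneg (hP u)]
    rcases eq_or_ne (P u) 0 with h0 | h0
    · simp [h0]
    · exact mul_le_mul_of_nonneg_left (hshift u h0) (hP u)
  calc |g x - conv g P x| ≤ ∑ u, |P u * (g x - g (x - u))| :=
        hdiff ▸ Finset.abs_sum_le_sum_abs _ _
    _ ≤ ∑ u, P u * ε := Finset.sum_le_sum fun u _ => hterm u
    _ = ε := by rw [← Finset.sum_mul, hP1, one_mul]

end Convolution

theorem conv_smoothing_of_periods_general {G : Type*} [AddCommGroup G] [Fintype G]
    (k : ℕ) (ε : ℝ) (X : Finset G) (z : G) (hz : z ∈ X) (g : G → ℝ)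
    (hper : ∀ t : G, (∃ a b : Fin k → G, (∀ i, a i ∈ X) ∧ (∀ i, b i ∈ X) ∧
        t = (∑ i, a i) - ∑ i, b i) → ∀ x, |g (x + t) - g x| ≤ ε) :
    ∀ x, |g x - conv g (convPow (mu (X.image (fun a => a - z))) k) x| ≤ ε := by
  intro x
  have hX' : (X.image fun a => a - z).Nonempty := ⟨z - z, Finset.mem_image_of_mem _ hz⟩
  refine abs_sub_conv_le (convPow_nonneg (mu_nonneg _) k)
    (by rw [sum_convPow, sum_mu hX', one_pow]) g x fun u hu => ?_
  obtain ⟨a, ha, rfl⟩ := exists_eq_sum_of_convPow_ne_zero hu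
  choose c hcX hcz using fun i => Finset.mem_image.1 (mem_of_mu_ne_zero (ha i))
  have hsum : ∑ i, a i = ∑ i, c i - ∑ _i : Fin k, z := by
    simp only [← hcz, Finset.sum_sub_distrib]
  have := hper _ ⟨c, fun _ => z, hcX, fun _ => hz, hsum⟩ (x - ∑ i, a i)
  rwa [sub_add_cancel] at this

/-- if `‖g(·+t) - g‖_∞ ≤ ε` for every `t ∈ kX - kX`, then
`‖g - g * μ_{X-z}^{(k)}‖_∞ ≤ ε` for any fixed `z ∈ X`. -/
theorem conv_smoothing_of_periods {G : Type*} [AddCommGroup G] [Fintype G]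
    (k : ℕ) (ε : ℝ) (X : Finset G) (hX : X.Nonempty) (z : G) (hz : z ∈ X) (g : G → ℝ)
    (hper : ∀ t : G, (∃ a b : Fin k → G, (∀ i, a i ∈ X) ∧ (∀ i, b i ∈ X) ∧
        t = (∑ i, a i) - ∑ i, b i) → ∀ x, |g (x + t) - g x| ≤ ε) :
    ∀ x, |g x - conv g (convPow (mu (X.image (fun a => a - z))) k) x| ≤ ε :=
  conv_smoothing_of_periods_general k ε X z hz g hper
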